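/- arXiv:2309.14859 — 2 statements merged into one kernel-verified Lean document; each statement's English description precedes it below -/
import Mathlib

section
/- SGD equivalence of merge ratio: if Θ' = γ^{1/n}Θ and we perform one SGD step on L̃^γ from Θ with learning rate η, and one SGD step on L̃ from Θ' with learning rate γ^{2/n}η, then the resulting iterates still satisfy the relation: new Θ' equals γ^{1/n} times new Θ. -/
open InnerProductSpace

lemma hasGradientAt_comp_smul {F : Type*} [NormedAddCommGroup F] [InnerProductSpace ℝ F] [CompleteSpace F]
    (f : F → ℝ) (c : ℝ) (x g : F) (h : HasGradientAt f g (c • x)) :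
    HasGradientAt (fun θ => f (c • θ)) (c • g) x := by
  rw [hasGradientAt_iff_hasFDerivAt] at h ⊢
  have hsm : HasFDerivAt (fun θ : F => c • θ) (c • ContinuousLinearMap.id ℝ F) x :=
    (hasFDerivAt_id x).const_smul c
  have := h.comp x hsm
  refine this.congr_fderiv ?_
  ext v
  simp [real_inner_smul_left, real_inner_smul_right, mul_comm]

/-- SGD equivalence of merge ratio: if `Θ' = γ^(1/n) • Θ`, then one SGD step on
`L̃ = L ∘ T` from `Θ'` with learning rate `γ^(2/n) η` stays related by `γ^(1/n)` to one SGD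
step on `L̃^γ = L ∘ (γ • T)` from `Θ` with learning rate `η`. -/
theorem sgd_merge_ratio_equiv (D M : ℕ) (n : ℕ) (hn : 1 ≤ n)
    (T : EuclideanSpace ℝ (Fin D) → EuclideanSpace ℝ (Fin M))
    (L : EuclideanSpace ℝ (Fin M) → ℝ)
    (hdiffT : Differentiable ℝ T) (hdiffL : Differentiable ℝ L)
    (hT : ∀ (c : ℝ) (θ : EuclideanSpace ℝ (Fin D)), T (c • θ) = c ^ n • T θ)
    (γ : ℝ) (hγ : 0 ≤ γ) (η : ℝ)
    (Θ Θ' : EuclideanSpace ℝ (Fin D))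
    (hrel : Θ' = (γ ^ ((1 : ℝ) / n)) • Θ) :
    Θ' - (γ ^ ((2 : ℝ) / n) * η) • gradient (fun θ => L (T θ)) Θ'
      = (γ ^ ((1 : ℝ) / n)) • (Θ - η • gradient (fun θ => L (γ • T θ)) Θ) := by
  set c : ℝ := γ ^ ((1 : ℝ) / n) with hc
  have hn0 : (n : ℝ) ≠ 0 := Nat.cast_ne_zero.mpr (by omega)
  have hcn : c ^ n = γ := by
    rw [hc, ← Real.rpow_natCast (γ ^ ((1:ℝ)/n)) n, ← Real.rpow_mul hγ]
    field_simp
    simp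
  have hc2 : γ ^ ((2 : ℝ) / n) = c ^ 2 := by
    rw [hc, ← Real.rpow_natCast (γ ^ ((1:ℝ)/n)) 2, ← Real.rpow_mul hγ]
    push_cast; ring_nf
  -- rewrite the γ-scaled objective as composition with c • ·
  have hcomp : (fun θ => L (γ • T θ)) = fun θ => L (T (c • θ)) := by
    funext θ
    rw [hT c θ, hcn]
  -- gradient identity
  have hgrad : gradient (fun θ => L (γ • T θ)) Θ
      = c • gradient (fun θ => L (T θ)) Θ' := by
    rw [hcomp, hrel]
    have hdiff : DifferentiableAt ℝ (fun θ => L (T θ)) (c • Θ) :=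
      (hdiffL (T (c • Θ))).comp _ (hdiffT (c • Θ))
    have h1 : HasGradientAt (fun θ => L (T θ)) (gradient (fun θ => L (T θ)) (c • Θ)) (c • Θ) :=
      hdiff.hasGradientAt
    exact (hasGradientAt_comp_smul _ c Θ _ h1).gradient
  rw [hgrad, hrel, hc2]
  module
end

section
/- For any m×n real matrices with m, n ≥ 2 and r satisfying 2 < r ≤ min(m,n), there exist B1, B2 ∈ ℝ^{m×r} and C1, C2 ∈ ℝ^{r×n} such that rank((B1C1) ⊙ (B2C2)) > 2r, provided min(m,n) ≥ r² and r² > 2r. -/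
open Matrix
open scoped Matrix

/-- The Hadamard decomposition can achieve rank strictly exceeding `2r`: there exist
`B1, B2 ∈ ℝ^{m×r}` and `C1, C2 ∈ ℝ^{r×n}` with `rank((B1C1) ⊙ (B2C2)) > 2r`, provided
`min(m,n) ≥ r²` and `r² > 2r`. -/
theorem loha_rank_exceeds_lora (m n r : ℕ) (hm : 2 ≤ m) (hn : 2 ≤ n)
    (hr : 2 < r) (hrmn : r ≤ min m n) (hmin : r ^ 2 ≤ min m n) (hrr : 2 * r < r ^ 2) :
    ∃ (B1 B2 : Matrix (Fin m) (Fin r) ℝ) (C1 C2 : Matrix (Fin r) (Fin n) ℝ),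
      2 * r < ((B1 * C1) ⊙ (B2 * C2)).rank := by
  have hrpos : 0 < r := by omega
  have hm2 : r ^ 2 ≤ m := le_trans hmin (min_le_left _ _)
  have hn2 : r ^ 2 ≤ n := le_trans hmin (min_le_right _ _)
  set B1 : Matrix (Fin m) (Fin r) ℝ :=
    fun x k => if x.val < r ^ 2 ∧ x.val / r = k.val then 1 else 0 with hB1
  set B2 : Matrix (Fin m) (Fin r) ℝ :=
    fun x k => if x.val < r ^ 2 ∧ x.val % r = k.val then 1 else 0 with hB2
  set C1 : Matrix (Fin r) (Fin n) ℝ :=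
    fun k y => if y.val < r ^ 2 ∧ y.val / r = k.val then 1 else 0 with hC1
  set C2 : Matrix (Fin r) (Fin n) ℝ :=
    fun k y => if y.val < r ^ 2 ∧ y.val % r = k.val then 1 else 0 with hC2
  refine ⟨B1, B2, C1, C2, ?_⟩
  -- a helper sum computation
  have key : ∀ (a b : ℕ), a < r → b < r →
      (∑ k : Fin r, (if a = k.val then (1:ℝ) else 0) * (if b = k.val then 1 else 0))
        = if a = b then 1 else 0 := by
    intro a b ha hb
    rw [Finset.sum_eq_single (⟨a, ha⟩ : Fin r)]
    · simp only [Fin.val_mk]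
      by_cases h : a = b
      · simp [h]
      · have hba : ¬ b = a := fun hh => h hh.symm
        simp [h, hba]
    · intro k _ hk
      have : a ≠ k.val := by
        intro h; apply hk; exact Fin.ext h.symm
      simp [this]
    · intro h; exact absurd (Finset.mem_univ _) h
  have hdivlt : ∀ a : ℕ, a < r ^ 2 → a / r < r := by
    intro a ha
    apply Nat.div_lt_of_lt_mul
    rwa [pow_two] at ha
  have hmod : ∀ a : ℕ, a % r < r := fun a => Nat.mod_lt a hrpos
  have hP1 : ∀ (x : Fin m) (y : Fin n), (B1 * C1) x y =
      if x.val < r ^ 2 ∧ y.val < r ^ 2 ∧ x.val / r = y.val / r then 1 else 0 := by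
    intro x y
    rw [Matrix.mul_apply]
    by_cases hx : x.val < r ^ 2
    · by_cases hy : y.val < r ^ 2
      · have := key (x.val / r) (y.val / r) (hdivlt _ hx) (hdivlt _ hy)
        simp only [hB1, hC1, hx, hy, true_and]
        exact this
      · simp [hB1, hC1, hy]
    · simp [hB1, hx]
  have hP2 : ∀ (x : Fin m) (y : Fin n), (B2 * C2) x y =
      if x.val < r ^ 2 ∧ y.val < r ^ 2 ∧ x.val % r = y.val % r then 1 else 0 := by
    intro x y
    rw [Matrix.mul_apply]
    by_cases hx : x.val < r ^ 2
    · by_cases hy : y.val < r ^ 2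
      · have := key (x.val % r) (y.val % r) (hmod _) (hmod _)
        simp only [hB2, hC2, hx, hy, true_and]
        exact this
      · simp [hB2, hC2, hy]
    · simp [hB2, hx]
  set D := (B1 * C1) ⊙ (B2 * C2) with hDdef
  have hD : ∀ (x : Fin m) (y : Fin n), D x y =
      if x.val < r ^ 2 ∧ x.val = y.val then 1 else 0 := by
    intro x y
    rw [hDdef, Matrix.hadamard_apply, hP1, hP2]
    by_cases hx : x.val < r ^ 2
    · by_cases hy : y.val < r ^ 2
      · by_cases hd : x.val / r = y.val / r <;> by_cases hmd : x.val % r = y.val % r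
        · have hxy : x.val = y.val := by
            calc x.val = r * (x.val / r) + x.val % r := (Nat.div_add_mod _ _).symm
              _ = r * (y.val / r) + y.val % r := by rw [hd, hmd]
              _ = y.val := Nat.div_add_mod _ _
          simp [hx, hy, hd, hmd, hxy]
        · have : x.val ≠ y.val := by intro h; apply hmd; rw [h]
          simp [hx, hy, hd, hmd, this]
        · have : x.val ≠ y.val := by intro h; apply hd; rw [h]
          simp [hx, hy, hd, this]
        · have : x.val ≠ y.val := by intro h; apply hd; rw [h]
          simp [hx, hy, hd, this]
      · have : x.val ≠ y.val := by omega
        simp [hx, hy, this]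
    · simp [hx]
  -- columns of D indexed by j < r^2 are standard basis vectors
  have hcol : ∀ j : Fin (r ^ 2), Dᵀ (Fin.castLE hn2 j) =
      Pi.basisFun ℝ (Fin m) (Fin.castLE hm2 j) := by
    intro j
    funext x
    rw [Matrix.transpose_apply, hD, Pi.basisFun_apply, Pi.single_apply]
    rcases eq_or_ne x (Fin.castLE hm2 j) with h | h
    · subst h
      simp [Fin.castLE, j.isLt]
    · have hxj : x.val ≠ j.val := by
        intro hv; apply h; exact Fin.ext hv
      simp [hxj, h]
  have hli : LinearIndependent ℝ (fun j : Fin (r ^ 2) => Dᵀ (Fin.castLE hn2 j)) := by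
    have : (fun j : Fin (r ^ 2) => Dᵀ (Fin.castLE hn2 j)) =
        (fun j : Fin (r ^ 2) =>
          Pi.basisFun ℝ (Fin m) (Fin.castLE hm2 j)) := by
      funext j; rw [hcol]
    rw [this]
    exact (Pi.basisFun ℝ (Fin m)).linearIndependent.comp _
      (Fin.castLE_injective hm2)
  have hspan : Submodule.span ℝ (Set.range (fun j : Fin (r ^ 2) => Dᵀ (Fin.castLE hn2 j)))
      ≤ Submodule.span ℝ (Set.range Dᵀ) := by
    apply Submodule.span_mono
    rintro _ ⟨j, rfl⟩
    exact ⟨Fin.castLE hn2 j, rfl⟩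
  have hfr : r ^ 2 ≤ Module.finrank ℝ (Submodule.span ℝ (Set.range Dᵀ)) := by
    have h1 := finrank_span_eq_card hli
    have h2 := Submodule.finrank_mono hspan
    rw [h1] at h2
    simpa using h2
  rw [Matrix.rank_eq_finrank_span_cols]
  rw [show D.col = Dᵀ from rfl]
  omega
end
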